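/- Fix m ≥ 1 and nonnegative reals p, p_0, p_1, …, p_m with p + Σ_{i=0}^m p_i = 1. Define the sequence (f_n)_{n≥0} of polynomials in ℝ[x_1,…,x_m] by f_0 = 1 and f_{n+1} = p·(x_1⋯x_m)·f_n + p_0·f_n(1,…,1) + Σ_{i=1}^m p_i · (Π_{j≠i} x_j) · (f_n evaluated at x_i = 1). Let Δ(t) := Π_{I ⊆ {1,…,m}} ( 1 − t·( p + p_0·[I = {1,…,m}] + Σ_{i∈I} p_i )·Π_{i∉I} x_i ), a polynomial of degree 2^m in t with coefficients in ℝ[x_1,…,x_m], where [·] is 1 if the condition holds and 0 otherwise. Then in the formal power series ring ℝ[x_1,…,x_m][[t]], the product Δ(t) · Σ_{n≥0} f_n t^n is a polynomial in t of degree at most 2^m − 1, i.e., its coefficient of t^n vanishes for every n ≥ 2^m. -/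

import Mathlib

open MvPolynomial

/-- The sequence of age polynomials of the Moran model with `m` individuals:
`f 0 = 1` and
`f (n+1) = p (x_1⋯x_m) f n + p_0 f n(1,…,1)
           + Σ_{i=1}^m p_i (Π_{j≠i} x_j) (f n evaluated at x_i = 1)`. -/
noncomputable def moranAges (m : ℕ) (p p₀ : ℝ) (pi : Fin m → ℝ) :
    ℕ → MvPolynomial (Fin m) ℝ
  | 0 => 1
  | n + 1 =>
      C p * (∏ i, X i) * moranAges m p p₀ pi n
      + C (p₀ * eval (fun _ => (1 : ℝ)) (moranAges m p p₀ pi n))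
      + ∑ i, C (pi i) * (∏ j ∈ Finset.univ.erase i, X j)
          * aeval (fun j => if j = i then 1 else X j) (moranAges m p p₀ pi n)

/-- The denominator
`Δ(t) = Π_{I ⊆ {1,…,m}} (1 - t (p + p₀ [I = {1,…,m}] + Σ_{i∈I} p_i) Π_{i∉I} x_i)`,
viewed in `ℝ[x_1,…,x_m][[t]]`. -/
noncomputable def moranDelta (m : ℕ) (p p₀ : ℝ) (pi : Fin m → ℝ) :
    PowerSeries (MvPolynomial (Fin m) ℝ) :=
  ∏ I ∈ (Finset.univ : Finset (Fin m)).powerset,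
    (1 - PowerSeries.C (R := MvPolynomial (Fin m) ℝ)
          (C (p + (if I = Finset.univ then p₀ else 0) + ∑ i ∈ I, pi i)
            * ∏ i ∈ Iᶜ, X i)
        * PowerSeries.X)


section MoranProofAux
open Finset

section Pdeg
variable {A : Type*} [CommRing A]

/-- `φ` has all coefficients `0` from degree `d` on. -/
def PdegLt (d : ℕ) (φ : PowerSeries A) : Prop :=
  ∀ n, d ≤ n → PowerSeries.coeff (R := A) n φ = 0

lemma PdegLt_zero (d : ℕ) : PdegLt d (0 : PowerSeries A) := by
  intro n _; simp

lemma PdegLt_one : PdegLt 1 (1 : PowerSeries A) := by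
  intro n hn
  rw [PowerSeries.coeff_one, if_neg (by omega)]

lemma PdegLt.mono {d e : ℕ} {φ : PowerSeries A} (h : d ≤ e) (hφ : PdegLt d φ) :
    PdegLt e φ := fun n hn => hφ n (le_trans h hn)

lemma PdegLt.add {d : ℕ} {φ ψ : PowerSeries A} (hφ : PdegLt d φ) (hψ : PdegLt d ψ) :
    PdegLt d (φ + ψ) := by
  intro n hn; rw [map_add, hφ n hn, hψ n hn, add_zero]

lemma PdegLt.sum {ι : Type*} {d : ℕ} {s : Finset ι} {f : ι → PowerSeries A}
    (h : ∀ i ∈ s, PdegLt d (f i)) : PdegLt d (∑ i ∈ s, f i) := by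
  intro n hn
  rw [map_sum]
  exact Finset.sum_eq_zero fun i hi => h i hi n hn

lemma PdegLt.mul {a b : ℕ} {φ ψ : PowerSeries A} (hφ : PdegLt (a + 1) φ)
    (hψ : PdegLt (b + 1) ψ) : PdegLt (a + b + 1) (φ * ψ) := by
  intro n hn
  rw [PowerSeries.coeff_mul]
  apply Finset.sum_eq_zero
  intro x hx
  rw [Finset.HasAntidiagonal.mem_antidiagonal] at hx
  rcases le_or_gt (a + 1) x.1 with h | h
  · rw [hφ x.1 h, zero_mul]
  · rw [hψ x.2 (by omega), mul_zero]

lemma PdegLt.C_mul {d : ℕ} {φ : PowerSeries A} (c : A) (hφ : PdegLt d φ) :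
    PdegLt d (PowerSeries.C (R := A) c * φ) := by
  intro n hn; rw [PowerSeries.coeff_C_mul, hφ n hn, mul_zero]

lemma PdegLt.X_mul {d : ℕ} {φ : PowerSeries A} (hφ : PdegLt d φ) :
    PdegLt (d + 1) (PowerSeries.X * φ) := by
  intro n hn
  obtain ⟨k, rfl⟩ : ∃ k, n = k + 1 := ⟨n - 1, by omega⟩
  rw [PowerSeries.coeff_succ_X_mul]
  exact hφ k (by omega)

lemma PdegLt_factor (c : A) : PdegLt 2 (1 - PowerSeries.C (R := A) c * PowerSeries.X) := by
  intro n hn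
  have h0 : n ≠ 0 := by omega
  have h1 : n ≠ 1 := by omega
  simp [PowerSeries.coeff_one, PowerSeries.coeff_C_mul, PowerSeries.coeff_X, h0, h1]

lemma PdegLt_prod {ι : Type*} [DecidableEq ι] (s : Finset ι) (f : ι → PowerSeries A)
    (h : ∀ i ∈ s, PdegLt 2 (f i)) : PdegLt (s.card + 1) (∏ i ∈ s, f i) := by
  induction s using Finset.induction_on with
  | empty => simpa using PdegLt_one
  | @insert a s ha ih =>
      rw [Finset.prod_insert ha, Finset.card_insert_of_notMem ha]
      have h1 : PdegLt (1 + 1) (f a) := h a (mem_insert_self a s)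
      have h2 : PdegLt (s.card + 1) (∏ i ∈ s, f i) :=
        ih fun i hi => h i (mem_insert_of_mem hi)
      exact (h1.mul h2).mono (by omega)

-- auxiliary power series decomposition lemmas
lemma PowerSeries.mk_succ (f : ℕ → A) :
    PowerSeries.mk f
      = PowerSeries.C (R := A) (f 0) + PowerSeries.X * PowerSeries.mk (fun n => f (n + 1)) := by
  ext n
  cases n with
  | zero => simp
  | succ n =>
      simp [PowerSeries.coeff_succ_X_mul, PowerSeries.coeff_C]

lemma PowerSeries.mk_C_mul (c : A) (f : ℕ → A) :
    PowerSeries.mk (fun n => c * f n) = PowerSeries.C (R := A) c * PowerSeries.mk f := by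
  ext n; simp [PowerSeries.coeff_C_mul]

lemma PowerSeries.mk_add (f g : ℕ → A) :
    PowerSeries.mk (fun n => f n + g n) = PowerSeries.mk f + PowerSeries.mk g := by
  ext n; simp

lemma PowerSeries.mk_sum {ι : Type*} (s : Finset ι) (f : ι → ℕ → A) :
    PowerSeries.mk (fun n => ∑ i ∈ s, f i n) = ∑ i ∈ s, PowerSeries.mk (f i) := by
  ext n; simp

lemma isUnit_factor (c : A) : IsUnit (1 - PowerSeries.C (R := A) c * PowerSeries.X) := by
  rw [PowerSeries.isUnit_iff_constantCoeff]
  simp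

end Pdeg

section Pdeg2
variable {A : Type*} [CommRing A] {φ ψ : PowerSeries A}

lemma PdegLt.mul' {a b c : ℕ} (ha : 0 < a) (hb : 0 < b) (hc : a + b - 1 ≤ c)
    (hφ : PdegLt a φ) (hψ : PdegLt b ψ) : PdegLt c (φ * ψ) := by
  obtain ⟨a', rfl⟩ : ∃ a', a = a' + 1 := ⟨a - 1, by omega⟩
  obtain ⟨b', rfl⟩ : ∃ b', b = b' + 1 := ⟨b - 1, by omega⟩
  exact (hφ.mul hψ).mono (by omega)

lemma PowerSeries.mk_zero_fun : PowerSeries.mk (fun _ => (0 : A)) = 0 := by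
  ext n; simp

end Pdeg2

namespace MoranAux

variable {m : ℕ} (p p₀ : ℝ) (pi : Fin m → ℝ)

/-- `f n` with the variables in `S` evaluated at `1`. -/
noncomputable def mg (S : Finset (Fin m)) (n : ℕ) : MvPolynomial (Fin m) ℝ :=
  aeval (fun j => if j ∈ S then 1 else X j) (moranAges m p p₀ pi n)

lemma aeval_ones (q : MvPolynomial (Fin m) ℝ) :
    aeval (fun _ : Fin m => (1 : MvPolynomial (Fin m) ℝ)) q
      = C (eval (fun _ => (1 : ℝ)) q) := by
  induction q using MvPolynomial.induction_on with
  | C a => simp [algebraMap_eq]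
  | add q r hq hr => simp only [map_add, hq, hr]
  | mul_X q i hq => simp only [map_mul, aeval_X, eval_X, hq, mul_one]

lemma mg_univ (n : ℕ) :
    mg p p₀ pi Finset.univ n = C (eval (fun _ => (1 : ℝ)) (moranAges m p p₀ pi n)) := by
  unfold mg
  rw [show (fun j : Fin m => if j ∈ Finset.univ then (1 : MvPolynomial (Fin m) ℝ) else X j)
      = fun _ => 1 from funext fun j => by simp]
  exact aeval_ones _

lemma mg_empty (n : ℕ) : mg p p₀ pi ∅ n = moranAges m p p₀ pi n := by
  unfold mg
  rw [show (fun j : Fin m => if j ∈ (∅ : Finset (Fin m)) then (1 : MvPolynomial (Fin m) ℝ)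
      else X j) = X from funext fun j => by simp]
  exact aeval_X_left_apply _

lemma mg_zero (S : Finset (Fin m)) : mg p p₀ pi S 0 = 1 := by
  unfold mg
  rw [moranAges.eq_1]
  simp

lemma prod_ite_compl (t : Finset (Fin m)) (S : Finset (Fin m)) :
    (∏ j ∈ t, (if j ∈ S then (1 : MvPolynomial (Fin m) ℝ) else X j))
      = ∏ j ∈ t.filter (· ∉ S), X j := by
  rw [Finset.prod_filter]
  exact Finset.prod_congr rfl fun j _ => by by_cases h : j ∈ S <;> simp [h]

lemma mg_succ (S : Finset (Fin m)) (n : ℕ) :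
    mg p p₀ pi S (n + 1)
      = (C p + C (∑ i ∈ S, pi i)) * (∏ i ∈ Sᶜ, X i) * mg p p₀ pi S n
        + C p₀ * mg p p₀ pi Finset.univ n
        + ∑ k ∈ Sᶜ, C (pi k) * (∏ j ∈ Sᶜ.erase k, X j) * mg p p₀ pi (insert k S) n := by
  have hφ1 : (∏ i, (if i ∈ S then (1 : MvPolynomial (Fin m) ℝ) else X i)) = ∏ i ∈ Sᶜ, X i := by
    rw [prod_ite_compl]
    congr 1
    ext j; simp
  have hφ2 : ∀ i : Fin m,
      (∏ j ∈ Finset.univ.erase i, (if j ∈ S then (1 : MvPolynomial (Fin m) ℝ) else X j))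
        = ∏ j ∈ Sᶜ.erase i, X j := by
    intro i
    rw [prod_ite_compl]
    congr 1
    ext j; simp [Finset.mem_erase, Finset.mem_compl, and_comm]
  have hcomp : ∀ i : Fin m,
      aeval (fun j : Fin m => if j ∈ S then (1 : MvPolynomial (Fin m) ℝ) else X j)
        (aeval (fun j : Fin m => if j = i then (1 : MvPolynomial (Fin m) ℝ) else X j)
          (moranAges m p p₀ pi n))
        = mg p p₀ pi (insert i S) n := by
    intro i
    have h := MvPolynomial.comp_aeval
      (f := fun j : Fin m => if j = i then (1 : MvPolynomial (Fin m) ℝ) else X j)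
      (φ := aeval (fun j : Fin m => if j ∈ S then (1 : MvPolynomial (Fin m) ℝ) else X j))
    have h2 := DFunLike.congr_fun h (moranAges m p p₀ pi n)
    simp only [AlgHom.comp_apply] at h2
    have hfun : (fun j : Fin m =>
        (aeval fun j : Fin m => if j ∈ S then (1 : MvPolynomial (Fin m) ℝ) else X j)
          (if j = i then (1 : MvPolynomial (Fin m) ℝ) else X j))
        = fun j : Fin m => if j ∈ insert i S then (1 : MvPolynomial (Fin m) ℝ) else X j := by
      funext j
      by_cases hji : j = i
      · subst hji; simp
      · by_cases hjS : j ∈ S <;> simp [hji, hjS, Finset.mem_insert]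
    unfold mg
    rw [h2, hfun]
  -- unfold the recursion
  have : mg p p₀ pi S (n + 1)
      = aeval (fun j : Fin m => if j ∈ S then (1 : MvPolynomial (Fin m) ℝ) else X j)
          (C p * (∏ i, X i) * moranAges m p p₀ pi n
            + C (p₀ * eval (fun _ => (1 : ℝ)) (moranAges m p p₀ pi n))
            + ∑ i, C (pi i) * (∏ j ∈ Finset.univ.erase i, X j)
                * aeval (fun j => if j = i then 1 else X j) (moranAges m p p₀ pi n)) := by
    rfl
  rw [this]
  rw [map_add, map_add, map_mul, map_mul, map_sum]
  simp only [aeval_C, algebraMap_eq, map_prod, aeval_X, map_mul]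
  rw [hφ1]
  rw [Finset.sum_congr rfl (fun i (_ : i ∈ Finset.univ) => by
    rw [hφ2 i, hcomp i] :
    ∀ i ∈ Finset.univ,
      C (pi i) * (∏ j ∈ Finset.univ.erase i,
        (if j ∈ S then (1 : MvPolynomial (Fin m) ℝ) else X j))
        * (aeval fun j : Fin m => if j ∈ S then (1 : MvPolynomial (Fin m) ℝ) else X j)
            ((aeval fun j : Fin m => if j = i then (1 : MvPolynomial (Fin m) ℝ) else X j)
              (moranAges m p p₀ pi n))
      = C (pi i) * (∏ j ∈ Sᶜ.erase i, X j) * mg p p₀ pi (insert i S) n)]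
  rw [← Finset.sum_add_sum_compl S]
  rw [Finset.sum_congr rfl (fun i hi => by
    rw [Finset.insert_eq_self.mpr hi,
      Finset.erase_eq_of_notMem (by simp [hi])] :
    ∀ i ∈ S, C (pi i) * (∏ j ∈ Sᶜ.erase i, X j) * mg p p₀ pi (insert i S) n
      = C (pi i) * (∏ j ∈ Sᶜ, X j) * mg p p₀ pi S n)]
  simp only [mul_assoc]
  rw [← Finset.sum_mul, ← map_sum C pi S]
  rw [← mg_univ p p₀ pi n]
  unfold mg
  ring


/-- `λ_S`. -/
noncomputable def mlam (S : Finset (Fin m)) : MvPolynomial (Fin m) ℝ :=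
  C (p + (if S = Finset.univ then p₀ else 0) + ∑ i ∈ S, pi i) * ∏ i ∈ Sᶜ, X i

/-- generating function of `mg S`. -/
noncomputable def mG (S : Finset (Fin m)) : PowerSeries (MvPolynomial (Fin m) ℝ) :=
  PowerSeries.mk (mg p p₀ pi S)

/-- the inhomogeneous part of the recursion for `mG S`. -/
noncomputable def mA (S : Finset (Fin m)) : PowerSeries (MvPolynomial (Fin m) ℝ) :=
  (if S = Finset.univ then 0
    else PowerSeries.C (R := MvPolynomial (Fin m) ℝ) (C p₀) * mG p p₀ pi Finset.univ)
  + ∑ k ∈ Sᶜ, PowerSeries.C (R := MvPolynomial (Fin m) ℝ)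
      (C (pi k) * ∏ j ∈ Sᶜ.erase k, X j) * mG p p₀ pi (insert k S)

lemma mg_succ' (S : Finset (Fin m)) (n : ℕ) :
    mg p p₀ pi S (n + 1)
      = mlam p p₀ pi S * mg p p₀ pi S n
        + ((if S = Finset.univ then 0 else C p₀ * mg p p₀ pi Finset.univ n)
          + ∑ k ∈ Sᶜ, (C (pi k) * ∏ j ∈ Sᶜ.erase k, X j) * mg p p₀ pi (insert k S) n) := by
  rw [mg_succ]
  by_cases hS : S = Finset.univ
  · subst hS
    simp only [mlam, if_pos rfl, compl_univ, Finset.sum_empty, Finset.prod_empty, map_add, C_add,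
      eq_self_iff_true, ite_true]
    ring
  · simp only [mlam, if_neg hS, map_add, C_add, C_0]
    ring

lemma mG_step (S : Finset (Fin m)) :
    (1 - PowerSeries.C (R := MvPolynomial (Fin m) ℝ) (mlam p p₀ pi S) * PowerSeries.X)
        * mG p p₀ pi S
      = 1 + PowerSeries.X * mA p p₀ pi S := by
  have h1 : mG p p₀ pi S
      = PowerSeries.C (R := MvPolynomial (Fin m) ℝ) (mg p p₀ pi S 0)
        + PowerSeries.X * PowerSeries.mk (fun n => mg p p₀ pi S (n + 1)) :=
    PowerSeries.mk_succ _
  rw [mg_zero, map_one] at h1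
  have h2 : PowerSeries.mk (fun n => mg p p₀ pi S (n + 1))
      = PowerSeries.C (R := MvPolynomial (Fin m) ℝ) (mlam p p₀ pi S) * mG p p₀ pi S
        + mA p p₀ pi S := by
    rw [show (fun n => mg p p₀ pi S (n + 1))
        = fun n => mlam p p₀ pi S * mg p p₀ pi S n
          + ((if S = Finset.univ then 0 else C p₀ * mg p p₀ pi Finset.univ n)
            + ∑ k ∈ Sᶜ, (C (pi k) * ∏ j ∈ Sᶜ.erase k, X j) * mg p p₀ pi (insert k S) n)
      from funext (mg_succ' p p₀ pi S)]
    rw [PowerSeries.mk_add, PowerSeries.mk_C_mul]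
    congr 1
    unfold mA
    rw [PowerSeries.mk_add]
    congr 1
    · by_cases hS : S = Finset.univ
      · simp only [hS, if_pos rfl]
        exact PowerSeries.mk_zero_fun
      · simp only [if_neg hS]
        exact PowerSeries.mk_C_mul _ _
    · rw [PowerSeries.mk_sum]
      exact Finset.sum_congr rfl fun k _ => PowerSeries.mk_C_mul _ _
  rw [h2] at h1
  linear_combination h1

/-- the factor `1 - λ_{S'} t`. -/
noncomputable def mfactor (S' : Finset (Fin m)) : PowerSeries (MvPolynomial (Fin m) ℝ) :=
  1 - PowerSeries.C (R := MvPolynomial (Fin m) ℝ) (mlam p p₀ pi S') * PowerSeries.X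

/-- `mfactor (S ∪ T)`, as a function of `T`. -/
noncomputable def ff (S T : Finset (Fin m)) : PowerSeries (MvPolynomial (Fin m) ℝ) :=
  mfactor p p₀ pi (S ∪ T)

lemma ff_empty (S : Finset (Fin m)) : ff p p₀ pi S ∅ = mfactor p p₀ pi S := by
  rw [ff, Finset.union_empty]

lemma ff_compl (S : Finset (Fin m)) : ff p p₀ pi S Sᶜ = mfactor p p₀ pi Finset.univ := by
  rw [ff, Finset.union_compl]

lemma ff_insert (S : Finset (Fin m)) (k : Fin m) (T : Finset (Fin m)) :
    ff p p₀ pi S (insert k T) = ff p p₀ pi (insert k S) T := by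
  rw [ff, ff, Finset.union_insert, Finset.insert_union]

/-- the product of the factors over all supersets of `S`. -/
noncomputable def mD (S : Finset (Fin m)) : PowerSeries (MvPolynomial (Fin m) ℝ) :=
  ∏ T ∈ Sᶜ.powerset, ff p p₀ pi S T

lemma main : ∀ d : ℕ, ∀ S : Finset (Fin m), Sᶜ.card = d →
    PdegLt (2 ^ d) (mD p p₀ pi S * mG p p₀ pi S) := by
  intro d
  induction d using Nat.strong_induction_on with
  | _ d ih =>
  intro S hd
  set D₂ : PowerSeries (MvPolynomial (Fin m) ℝ) :=
    ∏ T ∈ Sᶜ.powerset.erase ∅, ff p p₀ pi S T with hD₂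
  have hsplit : mD p p₀ pi S = mfactor p p₀ pi S * D₂ := by
    rw [mD, hD₂, ← Finset.mul_prod_erase _ _ (Finset.empty_mem_powerset Sᶜ), ff_empty]
  have hDG : mD p p₀ pi S * mG p p₀ pi S
      = D₂ + PowerSeries.X * (D₂ * mA p p₀ pi S) := by
    calc mD p p₀ pi S * mG p p₀ pi S
        = D₂ * ((1 - PowerSeries.C (R := MvPolynomial (Fin m) ℝ) (mlam p p₀ pi S)
            * PowerSeries.X) * mG p p₀ pi S) := by
          rw [hsplit, mfactor]; ring
      _ = D₂ * (1 + PowerSeries.X * mA p p₀ pi S) := by rw [mG_step]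
      _ = D₂ + PowerSeries.X * (D₂ * mA p p₀ pi S) := by ring
  rw [hDG]
  have h1d : (1 : ℕ) ≤ 2 ^ d := Nat.one_le_two_pow
  have hcard2 : (Sᶜ.powerset.erase ∅).card = 2 ^ d - 1 := by
    rw [Finset.card_erase_of_mem (Finset.empty_mem_powerset _), Finset.card_powerset, hd]
  have hD₂deg : PdegLt (2 ^ d) D₂ := by
    have h := PdegLt_prod (Sᶜ.powerset.erase ∅) (ff p p₀ pi S)
      (fun T _ => by rw [ff, mfactor]; exact PdegLt_factor _)
    rw [hcard2] at h
    exact h.mono (by omega)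
  apply hD₂deg.add
  suffices hA : PdegLt (2 ^ d - 1) (D₂ * mA p p₀ pi S) by
    exact hA.X_mul.mono (by omega)
  rw [mA, mul_add, Finset.mul_sum]
  apply PdegLt.add
  · -- the p₀ term
    by_cases hS : S = Finset.univ
    · simp only [hS, eq_self_iff_true, ite_true, mul_zero]
      exact PdegLt_zero _
    · rw [if_neg hS]
      have hScne : Sᶜ ≠ ∅ := by
        simp only [ne_eq, Finset.compl_eq_empty_iff]
        exact hS
      have hd1 : 1 ≤ d := by
        rcases Finset.nonempty_iff_ne_empty.mpr hScne with ⟨k, hk⟩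
        have := Finset.card_pos.mpr ⟨k, hk⟩
        omega
      have h2d : 2 ≤ 2 ^ d := by
        calc (2:ℕ) = 2 ^ 1 := by norm_num
        _ ≤ 2 ^ d := Nat.pow_le_pow_right (by norm_num) hd1
      have hmem : Sᶜ ∈ Sᶜ.powerset.erase ∅ :=
        Finset.mem_erase.mpr ⟨hScne, Finset.mem_powerset_self _⟩
      have hD₂split : D₂ = mfactor p p₀ pi Finset.univ
          * ∏ T ∈ (Sᶜ.powerset.erase ∅).erase Sᶜ, ff p p₀ pi S T := by
        rw [hD₂, ← Finset.mul_prod_erase _ _ hmem, ff_compl]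
      have hmDuniv : mD p p₀ pi (Finset.univ : Finset (Fin m))
          = mfactor p p₀ pi Finset.univ := by
        rw [mD, Finset.compl_univ, Finset.powerset_empty, Finset.prod_singleton, ff_empty]
      have hIH : PdegLt 1 (mD p p₀ pi (Finset.univ : Finset (Fin m))
          * mG p p₀ pi Finset.univ) := by
        have h := ih 0 (by omega) Finset.univ (by simp)
        simpa using h
      have hexp : D₂ * (PowerSeries.C (R := MvPolynomial (Fin m) ℝ) (C p₀) * mG p p₀ pi Finset.univ)
          = (∏ T ∈ (Sᶜ.powerset.erase ∅).erase Sᶜ, ff p p₀ pi S T)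
            * (PowerSeries.C (R := MvPolynomial (Fin m) ℝ) (C p₀)
              * (mD p p₀ pi Finset.univ * mG p p₀ pi Finset.univ)) := by
        rw [hD₂split, hmDuniv]; ring
      rw [hexp]
      have hcard3 : ((Sᶜ.powerset.erase ∅).erase Sᶜ).card = 2 ^ d - 2 := by
        rw [Finset.card_erase_of_mem hmem, hcard2]
        omega
      have hP1 : PdegLt (2 ^ d - 2 + 1)
          (∏ T ∈ (Sᶜ.powerset.erase ∅).erase Sᶜ, ff p p₀ pi S T) := by
        have h := PdegLt_prod ((Sᶜ.powerset.erase ∅).erase Sᶜ) (ff p p₀ pi S)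
          (fun T _ => by rw [ff, mfactor]; exact PdegLt_factor _)
        rwa [hcard3] at h
      exact hP1.mul' (by omega) (by omega) (by omega) (PdegLt.C_mul _ hIH)
  · -- the sum terms
    apply PdegLt.sum
    intro k hk
    have hd1 : 1 ≤ d := by
      have := Finset.card_pos.mpr ⟨k, hk⟩
      omega
    have hpow : 2 ^ (d - 1) * 2 = 2 ^ d := by
      rw [← pow_succ]
      congr 1
      omega
    have h1d' : (1:ℕ) ≤ 2 ^ (d - 1) := Nat.one_le_two_pow
    have hins_compl : (insert k S)ᶜ = Sᶜ.erase k := Finset.compl_insert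
    have hkey : mfactor p p₀ pi S * D₂
        = mfactor p p₀ pi S * ((∏ T ∈ (Sᶜ.erase k).powerset.erase ∅, ff p p₀ pi S T)
            * mD p p₀ pi (insert k S)) := by
      calc mfactor p p₀ pi S * D₂ = ∏ T ∈ Sᶜ.powerset, ff p p₀ pi S T := by
            rw [hD₂, ← ff_empty p p₀ pi S,
              Finset.mul_prod_erase Sᶜ.powerset (ff p p₀ pi S)
                (Finset.empty_mem_powerset Sᶜ)]
        _ = ∏ T ∈ (insert k (Sᶜ.erase k)).powerset, ff p p₀ pi S T := by
            rw [Finset.insert_erase hk]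
        _ = (∏ T ∈ (Sᶜ.erase k).powerset, ff p p₀ pi S T)
            * ∏ T ∈ (Sᶜ.erase k).powerset, ff p p₀ pi S (insert k T) :=
            Finset.prod_powerset_insert (Finset.notMem_erase k Sᶜ) _
        _ = (mfactor p p₀ pi S * ∏ T ∈ (Sᶜ.erase k).powerset.erase ∅, ff p p₀ pi S T)
            * mD p p₀ pi (insert k S) := by
            have e1 : (∏ T ∈ (Sᶜ.erase k).powerset, ff p p₀ pi S T)
                = mfactor p p₀ pi S
                  * ∏ T ∈ (Sᶜ.erase k).powerset.erase ∅, ff p p₀ pi S T := by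
              rw [← Finset.mul_prod_erase ((Sᶜ.erase k).powerset) (ff p p₀ pi S)
                (Finset.empty_mem_powerset _), ff_empty]
            have e2 : (∏ T ∈ (Sᶜ.erase k).powerset, ff p p₀ pi S (insert k T))
                = mD p p₀ pi (insert k S) := by
              rw [mD, hins_compl]
              exact Finset.prod_congr rfl fun T _ => ff_insert p p₀ pi S k T
            rw [e1, e2]
        _ = mfactor p p₀ pi S * ((∏ T ∈ (Sᶜ.erase k).powerset.erase ∅, ff p p₀ pi S T)
            * mD p p₀ pi (insert k S)) := by ring
    have hcancel : D₂ = (∏ T ∈ (Sᶜ.erase k).powerset.erase ∅, ff p p₀ pi S T)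
        * mD p p₀ pi (insert k S) := by
      have hu : IsUnit (mfactor p p₀ pi S) := by
        rw [mfactor]
        exact isUnit_factor _
      exact hu.mul_left_cancel hkey
    have hIH : PdegLt (2 ^ (d - 1))
        (mD p p₀ pi (insert k S) * mG p p₀ pi (insert k S)) := by
      apply ih (d - 1) (by omega)
      rw [hins_compl, Finset.card_erase_of_mem hk, hd]
    have hcard4 : ((Sᶜ.erase k).powerset.erase ∅).card = 2 ^ (d - 1) - 1 := by
      rw [Finset.card_erase_of_mem (Finset.empty_mem_powerset _), Finset.card_powerset,
        Finset.card_erase_of_mem hk, hd]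
    have hP1 : PdegLt (2 ^ (d - 1) - 1 + 1)
        (∏ T ∈ (Sᶜ.erase k).powerset.erase ∅, ff p p₀ pi S T) := by
      have h := PdegLt_prod ((Sᶜ.erase k).powerset.erase ∅) (ff p p₀ pi S)
        (fun T _ => by rw [ff, mfactor]; exact PdegLt_factor _)
      rwa [hcard4] at h
    have hexp : D₂ * (PowerSeries.C (R := MvPolynomial (Fin m) ℝ)
          (C (pi k) * ∏ j ∈ Sᶜ.erase k, X j) * mG p p₀ pi (insert k S))
        = (∏ T ∈ (Sᶜ.erase k).powerset.erase ∅, ff p p₀ pi S T)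
          * (PowerSeries.C (R := MvPolynomial (Fin m) ℝ) (C (pi k) * ∏ j ∈ Sᶜ.erase k, X j)
            * (mD p p₀ pi (insert k S) * mG p p₀ pi (insert k S))) := by
      rw [hcancel]; ring
    rw [hexp]
    exact hP1.mul' (by omega) (by omega) (by omega) (PdegLt.C_mul _ hIH)

end MoranAux
end MoranProofAux

/-- For the Moran model with `m ≥ 1` individuals, the product
`Δ(t) ⬝ Σ_{n≥0} f_n t^n` is a polynomial in `t` of degree at most `2^m - 1`:
its coefficient of `t^n` vanishes for every `n ≥ 2^m`. -/
theorem moranModel_generatingFunction_rational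
    (m : ℕ) (hm : 1 ≤ m) (p p₀ : ℝ) (pi : Fin m → ℝ)
    (hp : 0 ≤ p) (hp₀ : 0 ≤ p₀) (hpi : ∀ i, 0 ≤ pi i)
    (hsum : p + (p₀ + ∑ i, pi i) = 1) :
    ∀ n : ℕ, 2 ^ m ≤ n →
      PowerSeries.coeff (R := MvPolynomial (Fin m) ℝ) n
        (moranDelta m p p₀ pi * PowerSeries.mk (moranAges m p p₀ pi)) = 0 := by
  intro n hn
  have key := MoranAux.main p p₀ pi m ∅ (by
    rw [Finset.compl_empty, Finset.card_univ, Fintype.card_fin])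
  have hD : moranDelta m p p₀ pi = MoranAux.mD p p₀ pi ∅ := by
    rw [moranDelta, MoranAux.mD, Finset.compl_empty]
    refine Finset.prod_congr rfl fun T _ => ?_
    rw [MoranAux.ff, MoranAux.mfactor, MoranAux.mlam, Finset.empty_union]
  have hG : PowerSeries.mk (moranAges m p p₀ pi) = MoranAux.mG p p₀ pi ∅ := by
    rw [MoranAux.mG]
    exact congrArg _ (funext fun n => (MoranAux.mg_empty p p₀ pi n).symm)
  rw [hD, hG]
  exact key n hn
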